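/- Let g : [0,∞) → ℝ³ be a C¹ solution of the Hindmarsh-Rose ODE system u' = au² − bu³ + v − w + J, v' = α − βu² − v, w' = q(u−c) − rw, with all parameters a,b,α,β,q,r,J positive and c real. Define F(u,v,w) as a potential such that the functional Γ(g(t)) = −F(g(t)) computed as the line integral of the vector field along the trajectory satisfies (d/dt)Γ(g(t)) = −|g'(t)|². Then Γ is nonincreasing along trajectories, and if Γ(g(τ)) = Γ(g(0)) for some τ > 0 then g is constant (an equilibrium). -/

import Mathlib

/-!
The Lyapunov function Γ decreases at the rate `|g'|²`, so it is antitone. If `Γ τ = Γ 0` with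
`τ > 0`, then Γ is constant on `[0, τ]` and its one-sided derivative `-|g'(0)|²` at `0` vanishes:
`g 0` is an equilibrium of the Hindmarsh–Rose field. That field is polynomial, hence locally
Lipschitz, so by uniqueness of solutions `g` stays at `g 0` forever.
-/

open Set

def hindmarshRoseField (a b α β q r J c : ℝ) (p : ℝ × ℝ × ℝ) : ℝ × ℝ × ℝ :=
  (a * p.1 ^ 2 - b * p.1 ^ 3 + p.2.1 - p.2.2 + J, α - β * p.1 ^ 2 - p.2.1, q * (p.1 - c) - r * p.2.2)

theorem locallyLipschitz_hindmarshRoseField (a b α β q r J c : ℝ) :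
    LocallyLipschitz (hindmarshRoseField a b α β q r J c) := by
  refine ContDiff.locallyLipschitz (𝕂 := ℝ) ?_
  unfold hindmarshRoseField
  fun_prop

theorem HasDerivAt.eq_zero_of_eqOn_Icc {E : Type*} [NormedAddCommGroup E] [NormedSpace ℝ E]
    {f : ℝ → E} {f' : E} {x y : ℝ} (hf : HasDerivAt f f' x) (hxy : x < y)
    (hc : EqOn f (fun _ => f x) (Icc x y)) : f' = 0 :=
  (uniqueDiffOn_Icc hxy x (left_mem_Icc.2 hxy.le)).eq_deriv _ hf.hasDerivWithinAt
    ((hasDerivWithinAt_const x _ (f x)).congr hc (hc (left_mem_Icc.2 hxy.le)))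

theorem LocallyLipschitz.eq_of_hasDerivAt_of_map_eq_zero {E : Type*} [NormedAddCommGroup E]
    [NormedSpace ℝ E] {F : E → E} (hF : LocallyLipschitz F) {g : ℝ → E}
    (hg : ∀ t ≥ 0, HasDerivAt g (F (g t)) t) (hg0 : F (g 0) = 0) {T : ℝ} (hT : 0 ≤ T) :
    g T = g 0 := by
  have hcont : ContinuousOn g (Icc 0 T) := fun t ht => (hg t ht.1).continuousAt.continuousWithinAt
  obtain ⟨K, hK⟩ := (hF.locallyLipschitzOn (s := g '' Icc 0 T)).exists_lipschitzOnWith_of_compact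
    (isCompact_Icc.image_of_continuousOn hcont)
  refine ODE_solution_unique_of_mem_Icc_right (v := fun _ => F) (s := fun _ => g '' Icc 0 T)
    (fun _ _ => hK) hcont (fun t ht => (hg t ht.1).hasDerivWithinAt)
    (fun t ht => mem_image_of_mem g (Ico_subset_Icc_self ht)) continuousOn_const
    (fun _ _ => hg0 ▸ hasDerivWithinAt_const _ _ _)
    (fun _ _ => mem_image_of_mem g (left_mem_Icc.2 hT)) rfl (right_mem_Icc.2 hT)

theorem stmt_15_general (a b α β q r J c : ℝ)
    (u v w Γ : ℝ → ℝ)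
    (hu : ∀ t ≥ (0 : ℝ), HasDerivAt u (a * (u t) ^ 2 - b * (u t) ^ 3 + v t - w t + J) t)
    (hv : ∀ t ≥ (0 : ℝ), HasDerivAt v (α - β * (u t) ^ 2 - v t) t)
    (hw : ∀ t ≥ (0 : ℝ), HasDerivAt w (q * (u t - c) - r * w t) t)
    (hΓ : ∀ t ≥ (0 : ℝ), HasDerivAt Γ
      (-((a * (u t) ^ 2 - b * (u t) ^ 3 + v t - w t + J) ^ 2 +
         (α - β * (u t) ^ 2 - v t) ^ 2 + (q * (u t - c) - r * w t) ^ 2)) t) :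
    (∀ s t : ℝ, 0 ≤ s → s ≤ t → Γ t ≤ Γ s) ∧
      (∀ τ > (0 : ℝ), Γ τ = Γ 0 →
        ∀ t ≥ (0 : ℝ), u t = u 0 ∧ v t = v 0 ∧ w t = w 0) := by
  have hanti : AntitoneOn Γ (Ici 0) :=
    antitoneOn_of_hasDerivWithinAt_nonpos (convex_Ici 0)
      (fun t ht => (hΓ t ht).continuousAt.continuousWithinAt)
      (fun t ht => (hΓ t (interior_subset ht)).hasDerivWithinAt)
      (fun t _ => neg_nonpos.2 (by positivity))
  refine ⟨fun s t hs hst => hanti hs (hs.trans hst) hst, fun τ hτ hΓτ t ht => ?_⟩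
  have hconst : EqOn Γ (fun _ => Γ 0) (Icc 0 τ) := fun s hs =>
    le_antisymm (hanti self_mem_Ici hs.1 hs.1) (hΓτ ▸ hanti hs.1 hτ.le hs.2)
  have hsq := neg_eq_zero.1 ((hΓ 0 le_rfl).eq_zero_of_eqOn_Icc hτ hconst)
  simp only [add_eq_zero_iff_of_nonneg, add_nonneg, sq_nonneg, pow_eq_zero_iff, ne_eq,
    two_ne_zero, not_false_eq_true] at hsq
  obtain ⟨⟨hu0, hv0⟩, hw0⟩ := hsq
  have hg : ∀ t ≥ 0, HasDerivAt (fun t => (u t, v t, w t))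
      (hindmarshRoseField a b α β q r J c (u t, v t, w t)) t := fun t ht =>
    (hu t ht).prodMk ((hv t ht).prodMk (hw t ht))
  simpa using
    (locallyLipschitz_hindmarshRoseField a b α β q r J c).eq_of_hasDerivAt_of_map_eq_zero hg
      (by simp [hindmarshRoseField, hu0, hv0, hw0]) ht

theorem stmt_15 (a b α β q r J c : ℝ)
    (ha : 0 < a) (hb : 0 < b) (hα : 0 < α) (hβ : 0 < β)
    (hq : 0 < q) (hr : 0 < r) (hJ : 0 < J)
    (u v w Γ : ℝ → ℝ)
    (hu : ∀ t ≥ (0 : ℝ), HasDerivAt u (a * (u t) ^ 2 - b * (u t) ^ 3 + v t - w t + J) t)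
    (hv : ∀ t ≥ (0 : ℝ), HasDerivAt v (α - β * (u t) ^ 2 - v t) t)
    (hw : ∀ t ≥ (0 : ℝ), HasDerivAt w (q * (u t - c) - r * w t) t)
    (hΓ : ∀ t ≥ (0 : ℝ), HasDerivAt Γ
      (-((a * (u t) ^ 2 - b * (u t) ^ 3 + v t - w t + J) ^ 2 +
         (α - β * (u t) ^ 2 - v t) ^ 2 + (q * (u t - c) - r * w t) ^ 2)) t) :
    (∀ s t : ℝ, 0 ≤ s → s ≤ t → Γ t ≤ Γ s) ∧
      (∀ τ > (0 : ℝ), Γ τ = Γ 0 →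
        ∀ t ≥ (0 : ℝ), u t = u 0 ∧ v t = v 0 ∧ w t = w 0) :=
  stmt_15_general a b α β q r J c u v w Γ hu hv hw hΓ
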